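/- For f(w1,w2) = w1^2 w2^4 and the standard 2D Gaussian density φ, the modified zeta function ζ₂(z) = ∫∫ |w2|·(w1^2 w2^4)^z φ(w1,w2) dw1 dw2 equals (2^{3z+1/2}/π)·Γ(z+1/2)·Γ(2z+1) for all real z > -1/4. -/
import Mathlib


open Real MeasureTheory

lemma gauss_abs_rpow (q : ℝ) (hq : -1 < q) :
    ∫ x : ℝ, |x| ^ q * Real.exp (-(x ^ 2) / 2)
      = 2 ^ ((q + 1) / 2) * Real.Gamma ((q + 1) / 2) := by
  have h1 : ∫ x : ℝ, |x| ^ q * Real.exp (-(x ^ 2) / 2)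
      = 2 * ∫ x in Set.Ioi (0 : ℝ), x ^ q * Real.exp (-(x ^ 2) / 2) := by
    rw [← integral_comp_abs (f := fun x => x ^ q * Real.exp (-(x ^ 2) / 2))]
    congr 1 with x
    rw [sq_abs]
  have h2 : ∫ x in Set.Ioi (0 : ℝ), x ^ q * Real.exp (-(x ^ 2) / 2)
      = ∫ x in Set.Ioi (0 : ℝ), x ^ q * Real.exp (-(1/2) * x ^ (2 : ℝ)) := by
    refine setIntegral_congr_fun measurableSet_Ioi (fun x hx => ?_)
    rw [Real.rpow_two]
    ring_nf
  rw [h1, h2, integral_rpow_mul_exp_neg_mul_rpow two_pos hq one_half_pos]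
  have h3 : ((1:ℝ)/2) ^ (-(q + 1) / 2) = 2 ^ ((q + 1) / 2) := by
    rw [show ((1:ℝ)/2) = 2⁻¹ by norm_num, ← Real.rpow_neg_one (2:ℝ),
      ← Real.rpow_mul (by norm_num)]
    congr 1; ring
  rw [h3]; ring

/-- For `f(w1,w2) = w1^2 * w2^4` and the standard 2D Gaussian density,
`ζ₂(z) = ∫∫ |w2| (w1^2 w2^4)^z φ dw = (2^(3z+1/2)/π) Γ(z+1/2) Γ(2z+1)` for real `z > -1/4`. -/
theorem zeta2_w1sq_w2quart (z : ℝ) (hz : z > -(1/4)) :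
    (∫ w1 : ℝ, ∫ w2 : ℝ,
        |w2| * (w1 ^ 2 * w2 ^ 4) ^ z * (1 / (2 * π) * Real.exp (-(w1 ^ 2 + w2 ^ 2) / 2)))
      = (2 : ℝ) ^ (3 * z + 1 / 2) / π * Real.Gamma (z + 1 / 2) * Real.Gamma (2 * z + 1) := by
  have key : ∀ w1 w2 : ℝ,
      |w2| * (w1 ^ 2 * w2 ^ 4) ^ z * (1 / (2 * π) * Real.exp (-(w1 ^ 2 + w2 ^ 2) / 2))
      = (1 / (2 * π) * (|w1| ^ (2 * z) * Real.exp (-(w1 ^ 2) / 2)))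
        * (|w2| ^ (4 * z + 1) * Real.exp (-(w2 ^ 2) / 2)) := by
    intro w1 w2
    have hsplit : (w1 ^ 2 * w2 ^ 4) ^ z = |w1| ^ (2 * z) * |w2| ^ (4 * z) := by
      rw [Real.mul_rpow (by positivity) (by positivity)]
      congr 1
      · rw [← sq_abs, ← Real.rpow_natCast |w1| 2, ← Real.rpow_mul (abs_nonneg _)]
        norm_num
      · rw [show w2 ^ 4 = |w2| ^ 4 by rw [← abs_pow, abs_of_nonneg (by positivity)],
          ← Real.rpow_natCast |w2| 4, ← Real.rpow_mul (abs_nonneg _)]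
        norm_num
    have habs : |w2| * |w2| ^ (4 * z) = |w2| ^ (4 * z + 1) := by
      rcases eq_or_ne w2 0 with h | h
      · rcases eq_or_ne (4 * z) 0 with h4 | h4 <;>
          simp [h, h4, Real.zero_rpow, Real.zero_rpow (by linarith : (4:ℝ) * z + 1 ≠ 0)]
      · rw [Real.rpow_add (abs_pos.mpr h), Real.rpow_one]; ring
    have hexp : Real.exp (-(w1 ^ 2 + w2 ^ 2) / 2)
        = Real.exp (-(w1 ^ 2) / 2) * Real.exp (-(w2 ^ 2) / 2) := by
      rw [← Real.exp_add]; ring_nf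
    rw [hsplit, hexp, ← habs]; ring
  simp_rw [key, integral_const_mul, integral_mul_const]
  rw [integral_const_mul]
  rw [gauss_abs_rpow (2 * z) (by linarith), gauss_abs_rpow (4 * z + 1) (by linarith),
    show (2 * z + 1) / 2 = z + 1 / 2 by ring, show (4 * z + 1 + 1) / 2 = 2 * z + 1 by ring]
  have h2 : (2:ℝ) ^ (z + 1/2) * (2:ℝ) ^ (2 * z + 1) = 2 * (2:ℝ) ^ (3 * z + 1/2) := by
    rw [← Real.rpow_add two_pos, show z + 1/2 + (2 * z + 1) = 1 + (3 * z + 1/2) by ring,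
      Real.rpow_add two_pos, Real.rpow_one]
  linear_combination (Real.Gamma (z + 1/2) * Real.Gamma (2 * z + 1) / (2 * π)) * h2
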